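/- Let ω be a nonempty open subset of (0, 2π), let α ∈ ω and let ρ ∈ (0, 1) be a quadratic irrational (irrational root of an integer quadratic) such that [α, α + ρπ] ⊆ ω. Define f : (0, 2π) → ℝ as the characteristic function of [α, α + ρπ], and for k ∈ ℤ set f_k = ∫₀^{2π} f(x) e^{-i k x} dx. Then f ∈ L²(0, 2π) with support contained in ω; f₀ = ρπ ≠ 0; for every k ∈ ℤ \ {0}, f_k = (e^{-i k α}/(i k)) · (1 − e^{-i k ρ π}) ≠ 0; and there exists a constant C̃ > 0 such that |f_k| ≥ C̃ / k² for all k ∈ ℤ \ {0}. -/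

import Mathlib

/-!
Integrating `e^{-ikx}` over `[α, α + ρπ]` gives the closed form of `f_k`, whose modulus is
`2 |sin (kρπ/2)| / |k|`. As `ρ` is a quadratic irrational, Liouville's inequality gives
`|kρ - p| ≥ C / |k|` for all integers `p`; taking `p` even and using `|sin (πx)| ≥ 2 dist(x, ℤ)`
yields `|sin (kρπ/2)| ≥ C / |k|`, hence `|f_k| ≥ 2C / k²`, which also forces `f_k ≠ 0`.
-/

open Real MeasureTheory

noncomputable section

def fourierCoeff2π (f : ℝ → ℝ) (k : ℤ) : ℂ :=
  ∫ x in (0:ℝ)..(2*π), (f x : ℂ) * Complex.exp (-(Complex.I * (k:ℂ) * (x:ℂ)))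

open Polynomial in
theorem Irrational.exists_pos_div_abs_le_abs_mul_sub_of_quadratic {ρ : ℝ} (hirr : Irrational ρ)
    {a b c : ℤ} (ha : a ≠ 0) (hroot : (a : ℝ) * ρ ^ 2 + b * ρ + c = 0) :
    ∃ C : ℝ, 0 < C ∧ ∀ p q : ℤ, q ≠ 0 → C / |(q : ℝ)| ≤ |q * ρ - p| := by
  have hdeg := natDegree_quadratic (b := b) (c := c) ha
  obtain ⟨A, hA, hliouville⟩ := Liouville.exists_pos_real_of_irrational_root hirr
    (f := C a * X ^ 2 + C b * X + C c) (fun h => by rw [h, natDegree_zero] at hdeg; omega)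
    (by simpa using hroot)
  rw [hdeg] at hliouville
  have hpos : ∀ p q : ℤ, 0 < q → 1 / A / |(q : ℝ)| ≤ |q * ρ - p| := by
    intro p q hq
    obtain ⟨n, rfl⟩ : ∃ n : ℕ, q = n + 1 := ⟨q.toNat - 1, by omega⟩
    have hn : (0 : ℝ) < n + 1 := by positivity
    have h := hliouville p n
    push_cast
    rw [abs_of_pos hn, div_div, div_le_iff₀ (by positivity)]
    calc 1 ≤ (n + 1 : ℝ) ^ 2 * (|ρ - p / (n + 1)| * A) := h
      _ = |(n + 1) * ρ - p| * (A * (n + 1)) := by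
        rw [show (n + 1) * ρ - p = (n + 1) * (ρ - p / (n + 1)) by field_simp, abs_mul,
          abs_of_pos hn]
        ring
  refine ⟨1 / A, by positivity, fun p q hq => ?_⟩
  rcases hq.lt_or_gt with hneg | hq
  · convert hpos (-p) (-q) (by omega) using 1 <;> push_cast
    · rw [abs_neg]
    · rw [← abs_neg]; ring_nf
  · exact hpos p q hq

theorem Real.two_mul_abs_sub_round_le_abs_sin_pi_mul (x : ℝ) :
    2 * |x - round x| ≤ |sin (π * x)| := by
  have hshift : |sin (π * x)| = |sin (π * (x - round x))| := by
    rw [mul_sub, mul_comm π (round x : ℝ), sin_sub_int_mul_pi, abs_mul, abs_neg_one_zpow, one_mul]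
  have hsmall : |π * (x - round x)| ≤ π / 2 := by
    rw [abs_mul, abs_of_pos pi_pos]
    nlinarith [abs_sub_round x, pi_pos]
  calc 2 * |x - round x| = 2 / π * |π * (x - round x)| := by
        rw [abs_mul, abs_of_pos pi_pos]; field_simp
    _ ≤ |sin (π * x)| := hshift ▸ mul_abs_le_abs_sin hsmall

theorem div_abs_le_abs_sin_int_mul_div_two {ρ C : ℝ}
    (hC : ∀ p q : ℤ, q ≠ 0 → C / |(q : ℝ)| ≤ |q * ρ - p|) {k : ℤ} (hk : k ≠ 0) :
    C / |(k : ℝ)| ≤ |sin (k * (ρ * π) / 2)| := by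
  set x := (k : ℝ) * ρ / 2
  calc C / |(k : ℝ)| ≤ |k * ρ - ((2 * round x : ℤ) : ℝ)| := hC _ _ hk
    _ = 2 * |x - round x| := by
      rw [show (k : ℝ) * ρ - ((2 * round x : ℤ) : ℝ) = 2 * (x - round x) by push_cast; ring,
        abs_mul, abs_two]
    _ ≤ |sin (π * x)| := two_mul_abs_sub_round_le_abs_sin_pi_mul x
    _ = |sin (k * (ρ * π) / 2)| := by rw [show π * x = k * (ρ * π) / 2 by ring]

theorem integral_exp_neg_mul_of_add {c : ℂ} (hc : c ≠ 0) (α L : ℝ) :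
    ∫ x in α..α + L, Complex.exp (-(c * x))
      = Complex.exp (-(c * α)) / c * (1 - Complex.exp (-(c * L))) := by
  simp_rw [← neg_mul]
  rw [integral_exp_mul_complex (neg_ne_zero.2 hc), Complex.ofReal_add, mul_add, Complex.exp_add]
  field_simp
  ring

theorem norm_exp_div_mul_one_sub_exp (k : ℤ) (α L : ℝ) :
    ‖Complex.exp (-(Complex.I * k * α)) / (Complex.I * k)
        * (1 - Complex.exp (-(Complex.I * k * L)))‖
      = 2 * |sin (k * L / 2)| / |(k : ℝ)| := by
  have hphase : -(Complex.I * k * α) = ((-(k * α) : ℝ) : ℂ) * Complex.I := by push_cast; ring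
  have hexp : -(Complex.I * k * L) = Complex.I * ((-(k * L) : ℝ) : ℂ) := by push_cast; ring
  rw [norm_mul, norm_div, hphase, Complex.norm_exp_ofReal_mul_I, norm_mul, Complex.norm_I,
    Complex.norm_intCast, hexp, norm_sub_rev, Complex.norm_exp_I_mul_ofReal_sub_one,
    Real.norm_eq_abs, neg_div, sin_neg, mul_neg, abs_neg, abs_mul, abs_two]
  ring

theorem fourierCoeff2π_indicator_Icc {α β : ℝ} (hαβ : α ≤ β)
    (hsub : Set.Icc α β ⊆ Set.Ioc 0 (2 * π)) (k : ℤ) :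
    fourierCoeff2π (Set.indicator (Set.Icc α β) fun _ => (1 : ℝ)) k
      = ∫ x in α..β, Complex.exp (-(Complex.I * k * x)) := by
  have hind : ∀ x : ℝ, ((Set.indicator (Set.Icc α β) (fun _ => (1 : ℝ)) x : ℝ) : ℂ)
      * Complex.exp (-(Complex.I * k * x))
      = Set.indicator (Set.Icc α β) (fun x : ℝ => Complex.exp (-(Complex.I * k * x))) x := by
    intro x
    by_cases hx : x ∈ Set.Icc α β <;> simp [hx]
  rw [fourierCoeff2π, intervalIntegral.integral_of_le (by positivity)]
  simp_rw [hind]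
  rw [setIntegral_indicator measurableSet_Icc, Set.inter_eq_right.2 hsub,
    integral_Icc_eq_integral_Ioc, ← intervalIntegral.integral_of_le hαβ]

theorem indicator_fourier_coefficients_general
    (ω : Set ℝ) (hωsub : ω ⊆ Set.Ioo 0 (2*π))
    (α ρ : ℝ) (hρ : ρ ∈ Set.Ioo (0:ℝ) 1) (hirr : Irrational ρ)
    (hquad : ∃ a b c : ℤ, a ≠ 0 ∧ (a:ℝ) * ρ^2 + (b:ℝ) * ρ + (c:ℝ) = 0)
    (hsub : Set.Icc α (α + ρ*π) ⊆ ω)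
    (f : ℝ → ℝ) (hf : f = Set.indicator (Set.Icc α (α + ρ*π)) (fun _ => (1:ℝ))) :
    MemLp f 2 (volume.restrict (Set.Ioo 0 (2*π))) ∧
    Function.support f ⊆ ω ∧
    fourierCoeff2π f 0 = ((ρ*π : ℝ) : ℂ) ∧
    ((ρ*π : ℝ) : ℂ) ≠ 0 ∧
    (∀ k : ℤ, k ≠ 0 →
      fourierCoeff2π f k
        = Complex.exp (-(Complex.I * (k:ℂ) * (α:ℂ))) / (Complex.I * (k:ℂ)) *
            (1 - Complex.exp (-(Complex.I * (k:ℂ) * ((ρ*π : ℝ) : ℂ)))) ∧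
      fourierCoeff2π f k ≠ 0) ∧
    (∃ C : ℝ, 0 < C ∧ ∀ k : ℤ, k ≠ 0 → C / (k:ℝ)^2 ≤ ‖fourierCoeff2π f k‖) := by
  have hρπ : 0 < ρ * π := mul_pos hρ.1 pi_pos
  have hcoeff : ∀ k : ℤ,
      fourierCoeff2π f k = ∫ x in α..α + ρ * π, Complex.exp (-(Complex.I * k * x)) :=
    hf ▸ fourierCoeff2π_indicator_Icc (by linarith)
      fun x hx => Set.Ioo_subset_Ioc_self (hωsub (hsub hx))
  have hformula : ∀ k : ℤ, k ≠ 0 → fourierCoeff2π f k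
        = Complex.exp (-(Complex.I * (k:ℂ) * (α:ℂ))) / (Complex.I * (k:ℂ)) *
            (1 - Complex.exp (-(Complex.I * (k:ℂ) * ((ρ*π : ℝ) : ℂ)))) := fun k hk => by
    rw [hcoeff, integral_exp_neg_mul_of_add (by simpa using hk)]
  obtain ⟨a, b, c, ha, hroot⟩ := hquad
  obtain ⟨C, hC, hliouville⟩ := hirr.exists_pos_div_abs_le_abs_mul_sub_of_quadratic ha hroot
  have hlower : ∀ k : ℤ, k ≠ 0 → 2 * C / (k:ℝ)^2 ≤ ‖fourierCoeff2π f k‖ := fun k hk => by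
    rw [hformula k hk, norm_exp_div_mul_one_sub_exp, ← sq_abs, sq, ← div_div, mul_div_assoc]
    gcongr
    exact div_abs_le_abs_sin_int_mul_div_two hliouville hk
  refine ⟨?_, hf ▸ Set.support_indicator_subset.trans hsub, by simp [hcoeff],
    by exact_mod_cast hρπ.ne', fun k hk => ⟨hformula k hk, fun h0 => ?_⟩,
    2 * C, by positivity, hlower⟩
  · refine hf ▸ memLp_indicator_const 2 measurableSet_Icc 1 (Or.inr ?_)
    rw [Measure.restrict_apply measurableSet_Icc]
    exact ((measure_mono Set.inter_subset_right).trans_lt measure_Ioo_lt_top).ne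
  · have h := hlower k hk
    rw [h0, norm_zero] at h
    exact h.not_gt (by positivity)

/-- the indicator of `[α, α+ρπ]` (with `ρ` a quadratic irrational) is an
`L²` function supported in `ω` all of whose Fourier coefficients are nonzero, with
`|f_k| ≥ C̃/k²`. -/
theorem indicator_fourier_coefficients
    (ω : Set ℝ) (hωopen : IsOpen ω) (hωne : ω.Nonempty) (hωsub : ω ⊆ Set.Ioo 0 (2*π))
    (α ρ : ℝ) (hα : α ∈ ω) (hρ : ρ ∈ Set.Ioo (0:ℝ) 1) (hirr : Irrational ρ)
    (hquad : ∃ a b c : ℤ, a ≠ 0 ∧ (a:ℝ) * ρ^2 + (b:ℝ) * ρ + (c:ℝ) = 0)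
    (hsub : Set.Icc α (α + ρ*π) ⊆ ω)
    (f : ℝ → ℝ) (hf : f = Set.indicator (Set.Icc α (α + ρ*π)) (fun _ => (1:ℝ))) :
    MemLp f 2 (volume.restrict (Set.Ioo 0 (2*π))) ∧
    Function.support f ⊆ ω ∧
    fourierCoeff2π f 0 = ((ρ*π : ℝ) : ℂ) ∧
    ((ρ*π : ℝ) : ℂ) ≠ 0 ∧
    (∀ k : ℤ, k ≠ 0 →
      fourierCoeff2π f k
        = Complex.exp (-(Complex.I * (k:ℂ) * (α:ℂ))) / (Complex.I * (k:ℂ)) *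
            (1 - Complex.exp (-(Complex.I * (k:ℂ) * ((ρ*π : ℝ) : ℂ)))) ∧
      fourierCoeff2π f k ≠ 0) ∧
    (∃ C : ℝ, 0 < C ∧ ∀ k : ℤ, k ≠ 0 → C / (k:ℝ)^2 ≤ ‖fourierCoeff2π f k‖) :=
  indicator_fourier_coefficients_general ω hωsub α ρ hρ hirr hquad hsub f hf
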